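/- For the symmetric group S_n with basic invariants the elementary symmetric polynomials p_1,...,p_n, the quantity λ_a(x) := 2·Σ_{1≤i<j≤n} (∂p_a/∂x_i − ∂p_a/∂x_j)(x)/(x_i − x_j) is a polynomial in x (despite the denominators) and equals −(n−a+2)(n−a+1)·p_{a−2}(x) for all a = 1,...,n, where p_{−1} = 0 and p_0 = 1. -/

import Mathlib

/-!
`∂ᵢ e_{k+2} = e_{k+1}(x without xᵢ)`, and splitting `xⱼ` off this gives
`∂ᵢ e_{k+2} - ∂ⱼ e_{k+2} = -(xᵢ - xⱼ) · e_k(x without xᵢ, xⱼ)`. Removing one variable at a time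
and summing counts each monomial of `e_k` once per variable it misses, so in `m` variables
`∑ᵢ e_k(x without xᵢ) = (m - k) · e_k`; used twice, this evaluates the sum over ordered pairs
`i ≠ j`, which is twice the sum over `i < j`.
-/

open MvPolynomial Finset

theorem Multiset.esymm_cons_succ {R : Type*} [CommSemiring R] (a : R) (s : Multiset R) (k : ℕ) :
    (a ::ₘ s).esymm (k + 1) = s.esymm (k + 1) + a * s.esymm k := by
  simp [Multiset.esymm, Multiset.powersetCard_cons, Multiset.map_map, Multiset.sum_map_mul_left]

theorem Finset.two_nsmul_sum_Ioi {ι M : Type*} [Fintype ι] [LinearOrder ι]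
    [LocallyFiniteOrderTop ι] [LocallyFiniteOrderBot ι] [AddCommMonoid M]
    (f : ι → ι → M) (hf : ∀ i j, f i j = f j i) :
    2 • ∑ i, ∑ j ∈ Ioi i, f i j = ∑ i, ∑ j ∈ univ.erase i, f i j := by
  have hIio : ∑ i, ∑ j ∈ Iio i, f i j = ∑ i, ∑ j ∈ Ioi i, f i j := by
    rw [sum_comm' (t' := univ) (s' := Ioi) (by simp)]
    simp_rw [hf]
  simp_rw [← compl_singleton, ← Ioi_disjUnion_Iio, sum_disjUnion, sum_add_distrib, hIio,
    two_nsmul]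

namespace MvPolynomial

variable {σ R : Type*}

section CommSemiring

variable [CommSemiring R]

noncomputable def esymmOn (s : Finset σ) (k : ℕ) : MvPolynomial σ R :=
  ∑ t ∈ s.powersetCard k, ∏ i ∈ t, X i

theorem esymmOn_univ [Fintype σ] (k : ℕ) : esymmOn univ k = esymm σ R k := rfl

@[simp]
theorem esymmOn_zero (s : Finset σ) : esymmOn s 0 = (1 : MvPolynomial σ R) := by
  simp [esymmOn]

variable {s : Finset σ} {i : σ}

theorem pderiv_esymmOn_of_notMem (h : i ∉ s) (k : ℕ) :
    pderiv i (esymmOn s k : MvPolynomial σ R) = 0 := by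
  refine (map_sum (pderiv i) _ _).trans (sum_eq_zero fun t ht => ?_)
  refine prod_induction _ (fun q => pderiv i q = 0) (fun p q hp hq => by simp [hp, hq])
    (pderiv i).map_one_eq_zero fun j hj => pderiv_X_of_ne ?_
  exact ne_of_mem_of_not_mem ((mem_powersetCard.1 ht).1 hj) h

variable [DecidableEq σ]

theorem esymmOn_succ_of_mem (h : i ∈ s) (k : ℕ) :
    (esymmOn s (k + 1) : MvPolynomial σ R)
      = esymmOn (s.erase i) (k + 1) + X i * esymmOn (s.erase i) k := by
  conv_lhs => rw [← insert_erase h]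
  simp only [esymmOn, ← esymm_map_val, insert_val_of_notMem (notMem_erase i s),
    Multiset.map_cons, Multiset.esymm_cons_succ]

theorem pderiv_esymmOn_succ (h : i ∈ s) (k : ℕ) :
    pderiv i (esymmOn s (k + 1) : MvPolynomial σ R) = esymmOn (s.erase i) k := by
  rw [esymmOn_succ_of_mem h, map_add, pderiv_mul, pderiv_esymmOn_of_notMem (notMem_erase i s),
    pderiv_esymmOn_of_notMem (notMem_erase i s), pderiv_X_self]
  ring

theorem sum_esymmOn_erase (s : Finset σ) (k : ℕ) :
    ∑ i ∈ s, (esymmOn (s.erase i) k : MvPolynomial σ R) = (#s - k) • esymmOn s k := by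
  have hcount : ∀ t ∈ s.powersetCard k, #{i ∈ s | i ∉ t} = #s - k := fun t ht => by
    rw [← sdiff_eq_filter, card_sdiff_of_subset (mem_powersetCard.1 ht).1,
      (mem_powersetCard.1 ht).2]
  calc ∑ i ∈ s, (esymmOn (s.erase i) k : MvPolynomial σ R)
      = ∑ i ∈ s, ∑ t ∈ s.powersetCard k, if i ∉ t then ∏ j ∈ t, X j else 0 := by
        refine sum_congr rfl fun i _ => ?_
        rw [esymmOn, ← sum_filter]
        congr 1
        ext t
        simp [subset_erase, and_right_comm]
    _ = ∑ t ∈ s.powersetCard k, #{i ∈ s | i ∉ t} • ∏ j ∈ t, X j := by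
        rw [sum_comm]
        simp_rw [← sum_filter, sum_const]
    _ = (#s - k) • esymmOn s k := by
        rw [esymmOn, smul_sum]
        exact sum_congr rfl fun t ht => by rw [hcount t ht]

theorem sum_sum_esymmOn_erase_erase (s : Finset σ) (k : ℕ) :
    ∑ i ∈ s, ∑ j ∈ s.erase i, (esymmOn ((s.erase i).erase j) k : MvPolynomial σ R)
      = ((#s - k) * (#s - 1 - k)) • esymmOn s k := by
  calc ∑ i ∈ s, ∑ j ∈ s.erase i, (esymmOn ((s.erase i).erase j) k : MvPolynomial σ R)
      = ∑ i ∈ s, (#s - 1 - k) • esymmOn (s.erase i) k :=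
        sum_congr rfl fun i hi => by rw [sum_esymmOn_erase, card_erase_of_mem hi]
    _ = ((#s - k) * (#s - 1 - k)) • esymmOn s k := by
        rw [← smul_sum, sum_esymmOn_erase, smul_smul, mul_comm]

end CommSemiring

theorem pderiv_esymmOn_sub_pderiv_esymmOn [CommRing R] [DecidableEq σ] {s : Finset σ} {i j : σ}
    (hi : i ∈ s) (hj : j ∈ s) (hij : i ≠ j) (k : ℕ) :
    pderiv i (esymmOn s (k + 2) : MvPolynomial σ R) - pderiv j (esymmOn s (k + 2))
      = (X i - X j) * -esymmOn ((s.erase i).erase j) k := by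
  rw [pderiv_esymmOn_succ hi, pderiv_esymmOn_succ hj,
    esymmOn_succ_of_mem (mem_erase.2 ⟨hij.symm, hj⟩),
    esymmOn_succ_of_mem (mem_erase.2 ⟨hij, hi⟩), erase_right_comm]
  ring

end MvPolynomial

/-- The `λ`-vector of `Sₙ`: each difference `∂pₐ/∂xᵢ - ∂pₐ/∂xⱼ` is divisible by
`xᵢ - xⱼ` as a polynomial, and twice the sum over `i < j` of the quotients equals
`-(n-a+2)(n-a+1)·p_{a-2}` (with `p₋₁ = 0`, `p₀ = 1`). -/
theorem Sn_lambda_vector (n a : ℕ) (ha : 1 ≤ a) (han : a ≤ n) :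
    ∃ Q : Fin n → Fin n → MvPolynomial (Fin n) ℝ,
      (∀ i j : Fin n, i < j →
          pderiv i (esymm (Fin n) ℝ a) - pderiv j (esymm (Fin n) ℝ a)
            = (X i - X j) * Q i j)
      ∧ (2 : MvPolynomial (Fin n) ℝ) * ∑ i : Fin n, ∑ j ∈ Finset.Ioi i, Q i j
          = if a = 1 then 0
            else C (-(((n - a + 2) * (n - a + 1) : ℕ) : ℝ)) * esymm (Fin n) ℝ (a - 2) := by
  obtain rfl | ⟨k, rfl⟩ : a = 1 ∨ ∃ k, a = k + 2 := by
    rcases a with _ | _ | k <;> simp_all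
  · refine ⟨0, fun i j _ => ?_, by simp⟩
    simp [← esymmOn_univ, pderiv_esymmOn_succ (mem_univ _)]
  · refine ⟨fun i j => -esymmOn ((univ.erase i).erase j) k,
      fun i j hij => by
        rw [← esymmOn_univ, pderiv_esymmOn_sub_pderiv_esymmOn (mem_univ i) (mem_univ j) hij.ne],
      ?_⟩
    have hsymm : ∀ i j : Fin n, (esymmOn ((univ.erase i).erase j) k : MvPolynomial (Fin n) ℝ)
        = esymmOn ((univ.erase j).erase i) k := fun i j => by rw [erase_right_comm]
    rw [if_neg (by omega), show n - (k + 2) + 2 = n - k by omega,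
      show n - (k + 2) + 1 = n - 1 - k by omega, Nat.add_sub_cancel]
    simp only [sum_neg_distrib, mul_neg]
    rw [two_mul, ← two_nsmul, two_nsmul_sum_Ioi _ hsymm, ← esymmOn_univ,
      sum_sum_esymmOn_erase_erase, card_univ, Fintype.card_fin, map_neg, neg_mul, nsmul_eq_mul,
      map_natCast]
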